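/- arXiv:0902.2887 — 5 statements merged into one kernel-verified Lean document; each statement's English description precedes it below -/
import Mathlib

section
/- Let f = y^{γ₊}x^α − b·y^{γ₋}x^β be a non-hyperbolic binomial with α, β of disjoint supports and 0 < |α| ≤ |β|. If ξ ∈ W satisfies ξ_i = 0 for every index i with α_i > 0 or β_i > 0, then Eord_ξ(f) = ord_ξ(f). -/
open MvPolynomial

noncomputable section

/-- The variable index type: `x`-variables indexed by `Fin s`, `y`-variables by `Fin r`. -/
abbrev BV (s r : ℕ) : Type := Fin s ⊕ Fin r

/-- The polynomial ring `R = K[x_1,…,x_s,y_1,…,y_r]`. -/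
abbrev BR (K : Type) [Field K] (s r : ℕ) : Type := MvPolynomial (BV s r) K

variable (K : Type) [Field K] (s r : ℕ)

/-- `W`: the set of points all of whose `y`-coordinates are nonzero. -/
def Wset : Set (BV s r → K) := {ξ | ∀ j : Fin r, ξ (Sum.inr j) ≠ 0}

/-- `I_ξ`: the ideal generated by the variables vanishing at `ξ`. -/
def Ivan (ξ : BV s r → K) : Ideal (BR K s r) :=
  Ideal.span {p : BR K s r | ∃ i : BV s r, ξ i = 0 ∧ p = X i}

/-- `m_ξ`: the maximal ideal of polynomials vanishing at `ξ`. -/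
def mAt (ξ : BV s r → K) : Ideal (BR K s r) := RingHom.ker (eval ξ)

instance mAt_isMaximal (ξ : BV s r → K) : (mAt K s r ξ).IsMaximal :=
  RingHom.ker_isMaximal_of_surjective _ (fun a => ⟨C a, eval_C a⟩)

/-- `O_ξ`: the localization of `R` at `m_ξ`. -/
abbrev Oloc (ξ : BV s r → K) : Type := Localization.AtPrime (mAt K s r ξ)

/-- The `E`-order of an ideal `J` at a point `ξ`:
`sup { m : J·O_ξ ⊆ (I_ξ·O_ξ)^m }`. -/
def Eord (ξ : BV s r → K) (J : Ideal (BR K s r)) : ℕ∞ :=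
  sSup ((fun m : ℕ => (m : ℕ∞)) ''
    {m : ℕ | J.map (algebraMap (BR K s r) (Oloc K s r ξ)) ≤
      ((Ivan K s r ξ).map (algebraMap (BR K s r) (Oloc K s r ξ))) ^ m})

/-- The order of an ideal `J` at a point `ξ`:
`sup { m : J·O_ξ ⊆ (m_ξ·O_ξ)^m }`. -/
def ordAt (ξ : BV s r → K) (J : Ideal (BR K s r)) : ℕ∞ :=
  sSup ((fun m : ℕ => (m : ℕ∞)) ''
    {m : ℕ | J.map (algebraMap (BR K s r) (Oloc K s r ξ)) ≤
      ((mAt K s r ξ).map (algebraMap (BR K s r) (Oloc K s r ξ))) ^ m})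

/-- `x^α`. -/
def xPow (α : Fin s → ℕ) : BR K s r := ∏ i, X (Sum.inl i) ^ α i

/-- `y^γ` for `γ ∈ ℕ^r`. -/
def yPow (γ : Fin r → ℕ) : BR K s r := ∏ j, X (Sum.inr j) ^ γ j

/-- positive part `γ₊` of `γ ∈ ℤ^r`. -/
def ipos (γ : Fin r → ℤ) : Fin r → ℕ := fun j => (γ j).toNat

/-- negative part `γ₋` of `γ ∈ ℤ^r`. -/
def ineg (γ : Fin r → ℤ) : Fin r → ℕ := fun j => (-(γ j)).toNat

/-- a non-hyperbolic binomial `y^{γ₊}x^α − b·y^{γ₋}x^β`. -/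
def nhb (γ : Fin r → ℤ) (α β : Fin s → ℕ) (b : K) : BR K s r :=
  yPow K s r (ipos r γ) * xPow K s r α - C b * yPow K s r (ineg r γ) * xPow K s r β

/-- a hyperbolic equation `y^{δ₋} − μ·y^{δ₊}`. -/
def hyp (δ : Fin r → ℤ) (μ : K) : BR K s r :=
  yPow K s r (ineg r δ) - C μ * yPow K s r (ipos r δ)

/-- a generator of a binomial ideal:
`x^λ(y^{δ₋} − μ y^{δ₊})` or `x^ν(y^{γ₊}x^α − b y^{γ₋}x^β)` with `α,β` of disjoint supports. -/
def IsBinomGen (g : BR K s r) : Prop :=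
  (∃ (lam : Fin s → ℕ) (δ : Fin r → ℤ) (μ : K),
      g = xPow K s r lam * hyp K s r δ μ) ∨
  (∃ (ν α β : Fin s → ℕ) (γ : Fin r → ℤ) (b : K),
      (∀ i, α i = 0 ∨ β i = 0) ∧ g = xPow K s r ν * nhb K s r γ α β b)

/-- a binomial ideal: an ideal generated by finitely many binomial generators. -/
def IsBinomialIdeal (J : Ideal (BR K s r)) : Prop :=
  ∃ S : Finset (BR K s r), (∀ g ∈ S, IsBinomGen K s r g) ∧ J = Ideal.span (S : Set (BR K s r))

open Classical in
/-- `|ν|_ξ = Σ_{i : ξ_i = 0} ν_i` (sum over vanishing x-coordinates). -/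
def nsumAt (ξ : BV s r → K) (ν : Fin s → ℕ) : ℕ :=
  ∑ i, if ξ (Sum.inl i) = 0 then ν i else 0


/-- `Option A ⊕ B ≃ Option (A ⊕ B)`. -/
def optSum (A B : Type) : Option A ⊕ B ≃ Option (A ⊕ B) :=
  ((Equiv.optionEquivSumPUnit A).sumCongr (Equiv.refl B)).trans <|
    (Equiv.sumAssoc A PUnit.{1} B).trans <|
      ((Equiv.refl A).sumCongr (Equiv.sumComm PUnit.{1} B)).trans <|
        (Equiv.sumAssoc A B PUnit.{1}).symm.trans
          (Equiv.optionEquivSumPUnit (A ⊕ B)).symm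

/-- The variables of `K[x_1,…,x_{s+1},y]` split as the variable `x_1` (the `none` case)
and the variables of `K[x_2,…,x_{s+1},y]`. -/
def varEquiv : BV (s + 1) r ≃ Option (BV s r) :=
  ((finSuccEquiv s).sumCongr (Equiv.refl (Fin r))).trans (optSum (Fin s) (Fin r))

/-- Identification of `R = K[x_1,…,x_{s+1},y]` with `R'[x_1]`, `R' = K[x_2,…,x_{s+1},y]`. -/
def toPoly : BR K (s + 1) r ≃ₐ[K] Polynomial (BR K s r) :=
  (renameEquiv K (varEquiv s r)).trans (optionEquivLeft K (BV s r))

/-- `a_{f,k}`: the coefficient of `x_1^k` in `f` under the identification `R = R'[x_1]`. -/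
def coeffAt (f : BR K (s + 1) r) (k : ℕ) : BR K s r :=
  (toPoly K s r f).coeff k

/-- The coefficient ideal `C(P,c)` of `P` along `E` with respect to `V = {x_1 = 0}`,
with factorial normalization: it is generated by the `a_{f,k}^{c!/(c-k)}`, `f ∈ P`, `k < c`. -/
def coeffIdeal (P : Ideal (BR K (s + 1) r)) (c : ℕ) : Ideal (BR K s r) :=
  Ideal.span {g : BR K s r |
    ∃ f ∈ P, ∃ k < c, g = coeffAt K s r f k ^ (Nat.factorial c / (c - k))}

/-- `ξ'`: the point `ξ` with its first (`x_1`) coordinate removed. -/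
def resPt (ξ : BV (s + 1) r → K) : BV s r → K :=
  fun v => match v with
  | Sum.inl i => ξ (Sum.inl i.succ)
  | Sum.inr j => ξ (Sum.inr j)

open Classical in
/-- The chart morphism `σ_j` of the blow-up along `Z = ∩_{i ∈ I} {x_i = 0}`:
`x_i ↦ x_i·x_j` for `i ∈ I ∖ {j}`, all other variables are fixed. -/
def chart (I : Finset (Fin s)) (j : Fin s) : BR K s r →ₐ[K] BR K s r :=
  aeval (fun v : BV s r => match v with
    | Sum.inl i => if i ∈ I ∧ i ≠ j then X (Sum.inl i) * X (Sum.inl j) else X (Sum.inl i)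
    | Sum.inr k => X (Sum.inr k))

end

/-!
Since `ξ` vanishes on the supports of `α` and `β` and `|α| ≤ |β|`, both terms of `f` lie in
`I_ξ^|α|`, so `|α| ≤ Eord_ξ(f) ≤ ord_ξ(f)`. Conversely, after the translation `X ↦ X + ξ` the
coefficient of `x^α` in `f` is `ξ^{γ₊} ≠ 0`: the second term cannot contribute, because
`α ≠ β` and the `y`-variables carry no `x`-degree. Hence `f ∉ m_ξ^{|α|+1}`, and since this power
of the maximal ideal is primary, it is the contraction of its extension to `O_ξ`, so
`ord_ξ(f) ≤ |α|`.
-/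

namespace Ideal

theorem isPrimary_pow_of_isMaximal {R : Type*} [CommRing R] {M : Ideal R} [M.IsMaximal]
    {k : ℕ} (hk : k ≠ 0) : (M ^ k).IsPrimary := by
  apply isPrimary_of_isMaximal_radical
  rwa [radical_pow M hk, IsMaximal.isPrime ‹_› |>.radical]

theorem under_map_pow_localization_atPrime {R : Type*} [CommRing R] (M : Ideal R) [M.IsMaximal]
    {k : ℕ} (hk : k ≠ 0) :
    ((M ^ k).map (algebraMap R (Localization.AtPrime M))).under R = M ^ k := by
  refine IsLocalization.under_map_of_isPrimary_disjoint M.primeCompl _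
    (isPrimary_pow_of_isMaximal hk) ?_
  exact Set.disjoint_left.mpr fun _ ha hak => ha (pow_le_self hk hak)

end Ideal

namespace MvPolynomial

variable {σ R : Type*} [CommRing R]

noncomputable def translation (ξ : σ → R) : MvPolynomial σ R →ₐ[R] MvPolynomial σ R :=
  aeval fun v => X v + C (ξ v)

theorem translation_X (ξ : σ → R) (v : σ) : translation ξ (X v) = X v + C (ξ v) :=
  aeval_X _ v

theorem constantCoeff_translation (ξ : σ → R) (p : MvPolynomial σ R) :
    constantCoeff (translation ξ p) = eval ξ p := by
  induction p using MvPolynomial.induction_on with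
  | C a => simp [translation]
  | add p q hp hq => simp only [map_add, hp, hq]
  | mul_X p v hp => simp [map_mul, hp, translation_X]

theorem translation_mem_pow_idealOfVars {ξ : σ → R} {p : MvPolynomial σ R} {N : ℕ}
    (hp : p ∈ RingHom.ker (eval ξ) ^ N) : translation ξ p ∈ idealOfVars σ R ^ N := by
  have hker : (RingHom.ker (eval ξ)).map (translation ξ) ≤ idealOfVars σ R := by
    rw [Ideal.map_le_iff_le_comap]
    intro q hq
    rw [Ideal.mem_comap, ← pow_one (idealOfVars σ R), mem_pow_idealOfVars_iff']
    intro d hd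
    rw [Nat.lt_one_iff, Finsupp.degree_eq_zero_iff] at hd
    rw [hd, ← constantCoeff_eq, constantCoeff_translation]
    exact hq
  have hmap := Ideal.mem_map_of_mem (translation ξ) hp
  rw [Ideal.map_pow] at hmap
  exact Ideal.pow_right_mono hker N hmap

end MvPolynomial

noncomputable section Binomial

variable {K : Type} [Field K] {s r : ℕ}

def xExp (α : Fin s → ℕ) : BV s r →₀ ℕ :=
  Finsupp.equivFunOnFinite.symm (Sum.elim α 0)

@[simp]
theorem xExp_inl (α : Fin s → ℕ) (i : Fin s) : xExp (r := r) α (Sum.inl i) = α i := rfl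

@[simp]
theorem xExp_inr (α : Fin s → ℕ) (j : Fin r) : xExp α (Sum.inr j) = 0 := rfl

theorem xPow_eq_monomial (α : Fin s → ℕ) : xPow K s r α = monomial (xExp α) 1 := by
  rw [monomial_eq, C_1, one_mul, Finsupp.prod_fintype _ _ fun _ => pow_zero _,
    Fintype.prod_sum_type]
  simp [xPow]

theorem degree_xExp (α : Fin s → ℕ) : (xExp (r := r) α).degree = ∑ i, α i := by
  simp [Finsupp.degree_eq_sum, Fintype.sum_sum_type]

theorem xPow_mem_pow {α : Fin s → ℕ} {I : Ideal (BR K s r)}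
    (h : ∀ i, α i ≠ 0 → X (Sum.inl i) ∈ I) : xPow K s r α ∈ I ^ (∑ i, α i) := by
  rw [xPow, ← Finset.prod_pow_eq_pow_sum]
  refine Ideal.prod_mem_prod fun i _ => ?_
  by_cases hi : α i = 0
  · simp [hi]
  · exact Ideal.pow_mem_pow (h i hi) _

theorem translation_xPow {ξ : BV s r → K} {α : Fin s → ℕ}
    (h : ∀ i, α i ≠ 0 → ξ (Sum.inl i) = 0) : translation ξ (xPow K s r α) = xPow K s r α := by
  rw [xPow, map_prod]
  refine Finset.prod_congr rfl fun i _ => ?_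
  by_cases hi : α i = 0
  · simp [hi]
  · simp [translation_X, h i hi]

theorem translation_yPow (ξ : BV s r → K) (e : Fin r → ℕ) :
    translation ξ (yPow K s r e) = rename Sum.inr (∏ j, (X j + C (ξ (Sum.inr j))) ^ e j) := by
  simp [yPow, translation_X]

theorem coeff_xExp_rename_inr_mul_xPow (P : MvPolynomial (Fin r) K) (α β : Fin s → ℕ) :
    coeff (xExp α) (rename Sum.inr P * xPow K s r β) =
      if α = β then constantCoeff P else 0 := by
  rw [xPow_eq_monomial, coeff_mul_monomial', mul_one]
  split_ifs with hle hαβ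
  · subst hαβ
    rw [tsub_self, ← constantCoeff_eq, constantCoeff_rename]
  · refine coeff_rename_eq_zero _ _ _ fun u hu => absurd ?_ hαβ
    funext i
    have hβα := hle (Sum.inl i)
    have hi := congr($hu (Sum.inl i))
    rw [Finsupp.mapDomain_of_notMem_range _ _ (by simp)] at hi
    simp only [Finsupp.coe_tsub, Pi.sub_apply, xExp_inl] at hi hβα
    omega
  · exact absurd (‹α = β› ▸ le_rfl) hle
  · rfl

theorem Ivan_le_mAt (ξ : BV s r → K) : Ivan K s r ξ ≤ mAt K s r ξ := by
  rw [Ivan, Ideal.span_le]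
  rintro _ ⟨i, hi, rfl⟩
  simp [mAt, hi]

theorem Eord_le_ordAt (ξ : BV s r → K) (J : Ideal (BR K s r)) :
    Eord K s r ξ J ≤ ordAt K s r ξ J :=
  sSup_le_sSup <| Set.image_mono fun _ hm =>
    hm.trans <| Ideal.pow_right_mono (Ideal.map_mono (Ivan_le_mAt ξ)) _

theorem le_Eord_of_le_pow {ξ : BV s r → K} {J : Ideal (BR K s r)} {n : ℕ}
    (hJ : J ≤ Ivan K s r ξ ^ n) : (n : ℕ∞) ≤ Eord K s r ξ J := by
  refine le_sSup ⟨n, ?_, rfl⟩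
  rw [Set.mem_ofPred_eq, ← Ideal.map_pow]
  exact Ideal.map_mono hJ

theorem ordAt_le_of_notMem_pow {ξ : BV s r → K} {J : Ideal (BR K s r)} {f : BR K s r} {n : ℕ}
    (hfJ : f ∈ J) (hf : f ∉ mAt K s r ξ ^ (n + 1)) : ordAt K s r ξ J ≤ n := by
  refine sSup_le ?_
  rintro _ ⟨m, hm, rfl⟩
  by_contra! hnm
  apply hf
  rw [← Ideal.under_map_pow_localization_atPrime _ n.succ_ne_zero, Ideal.mem_comap,
    Ideal.map_pow]
  exact Ideal.pow_le_pow_right (by exact_mod_cast hnm) (hm (Ideal.mem_map_of_mem _ hfJ))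

theorem nhb_mem_Ivan_pow {γ : Fin r → ℤ} {α β : Fin s → ℕ} (b : K) {ξ : BV s r → K}
    (hαβ : ∑ i, α i ≤ ∑ i, β i) (hvan : ∀ i, (0 < α i ∨ 0 < β i) → ξ (Sum.inl i) = 0) :
    nhb K s r γ α β b ∈ Ivan K s r ξ ^ ∑ i, α i := by
  have hX : ∀ i, (0 < α i ∨ 0 < β i) → X (Sum.inl i) ∈ Ivan K s r ξ := fun i hi =>
    Ideal.subset_span ⟨Sum.inl i, hvan i hi, rfl⟩
  have hxα := xPow_mem_pow fun i hi => hX i (Or.inl (Nat.pos_of_ne_zero hi))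
  have hxβ := Ideal.pow_le_pow_right hαβ <|
    xPow_mem_pow (α := β) fun i hi => hX i (Or.inr (Nat.pos_of_ne_zero hi))
  exact Ideal.sub_mem _ (Ideal.mul_mem_left _ _ hxα) (Ideal.mul_mem_left _ _ hxβ)

theorem nhb_notMem_mAt_pow {γ : Fin r → ℤ} {α β : Fin s → ℕ} (b : K) {ξ : BV s r → K}
    (hαβ : α ≠ β) (hξ : ξ ∈ Wset K s r)
    (hvan : ∀ i, (0 < α i ∨ 0 < β i) → ξ (Sum.inl i) = 0) :
    nhb K s r γ α β b ∉ mAt K s r ξ ^ (∑ i, α i + 1) := by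
  intro hf
  have hcoeff := (mem_pow_idealOfVars_iff' _ _).mp (translation_mem_pow_idealOfVars hf)
    (xExp α) (by rw [degree_xExp]; omega)
  rw [nhb, map_sub, map_mul, map_mul, map_mul, translation_yPow, translation_yPow,
    translation_xPow fun i hi => hvan i (Or.inl (Nat.pos_of_ne_zero hi)),
    translation_xPow fun i hi => hvan i (Or.inr (Nat.pos_of_ne_zero hi)),
    show translation ξ (C b) = rename Sum.inr (C b) by simp [translation], ← map_mul, coeff_sub,
    coeff_xExp_rename_inr_mul_xPow, coeff_xExp_rename_inr_mul_xPow, if_pos rfl, if_neg hαβ,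
    sub_zero] at hcoeff
  simp only [map_prod, map_pow, map_add, constantCoeff_X, constantCoeff_C, zero_add] at hcoeff
  exact Finset.prod_ne_zero_iff.mpr (fun j _ => pow_ne_zero _ (hξ j)) hcoeff

end Binomial

theorem Eord_eq_ord_of_vanishing_support_general
    (K : Type) [Field K] (s r : ℕ)
    (γ : Fin r → ℤ) (α β : Fin s → ℕ) (b : K)
    (hdisj : ∀ i, α i = 0 ∨ β i = 0)
    (hα : 0 < ∑ i, α i) (hαβ : ∑ i, α i ≤ ∑ i, β i)
    (ξ : BV s r → K) (hξ : ξ ∈ Wset K s r)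
    (hvan : ∀ i, (0 < α i ∨ 0 < β i) → ξ (Sum.inl i) = 0) :
    Eord K s r ξ (Ideal.span {nhb K s r γ α β b}) =
      ordAt K s r ξ (Ideal.span {nhb K s r γ α β b}) := by
  obtain ⟨i, -, hi⟩ := Finset.exists_ne_zero_of_sum_ne_zero hα.ne'
  have hne : α ≠ β := fun h => hi ((hdisj i).resolve_right (h ▸ hi))
  refine le_antisymm (Eord_le_ordAt ξ _) ?_
  calc ordAt K s r ξ (Ideal.span {nhb K s r γ α β b})
      ≤ ∑ i, α i := ordAt_le_of_notMem_pow (Ideal.mem_span_singleton_self _)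
        (nhb_notMem_mAt_pow b hne hξ hvan)
    _ ≤ Eord K s r ξ (Ideal.span {nhb K s r γ α β b}) :=
      le_Eord_of_le_pow ((Ideal.span_singleton_le_iff_mem _).mpr (nhb_mem_Ivan_pow b hαβ hvan))

/-- for a non-hyperbolic binomial `f = y^{γ₊}x^α − b·y^{γ₋}x^β` with disjoint
supports and `0 < |α| ≤ |β|`, if `ξ ∈ W` has `ξ_i = 0` for every `i` with `α_i > 0` or
`β_i > 0`, then `Eord_ξ(f) = ord_ξ(f)`. -/
theorem Eord_eq_ord_of_vanishing_support
    (K : Type) [Field K] [IsAlgClosed K] (s r : ℕ)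
    (γ : Fin r → ℤ) (α β : Fin s → ℕ) (b : K)
    (hdisj : ∀ i, α i = 0 ∨ β i = 0)
    (hα : 0 < ∑ i, α i) (hαβ : ∑ i, α i ≤ ∑ i, β i)
    (ξ : BV s r → K) (hξ : ξ ∈ Wset K s r)
    (hvan : ∀ i, (0 < α i ∨ 0 < β i) → ξ (Sum.inl i) = 0) :
    Eord K s r ξ (Ideal.span {nhb K s r γ α β b}) =
      ordAt K s r ξ (Ideal.span {nhb K s r γ α β b}) :=
  Eord_eq_ord_of_vanishing_support_general K s r γ α β b hdisj hα hαβ ξ hξ hvan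
end

section
/- Let J ⊆ R be a binomial ideal and let ξ, η ∈ W be two points with the same set of vanishing coordinates, i.e. {i : ξ_i = 0} = {i : η_i = 0}. Then Eord_ξ(J) = Eord_η(J). (The E-order is constant along the points of each stratum E^0_Λ of the stratification of the ambient space defined by the normal crossing divisor E of coordinate hyperplanes.) -/
open MvPolynomial

/-!
Let `I` be the ideal generated by the variables `X i`, `i ∈ S`. Substituting `X i ↦ t • X i`
for `i ∈ S` turns membership in `I ^ m` into divisibility by `t ^ m`; as `t` is prime, `I ^ m`
is primary. It lies inside every `m_ξ` with `ξ` vanishing on `S`, so it is contracted from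
`O_ξ`, and `Eord_ξ(J) = sup {m : J ⊆ I_ξ ^ m}` depends on `ξ` only through its zero set.
-/

open Finsupp

namespace MvPolynomial

variable {σ R : Type*} [CommRing R]

noncomputable def scaleVars (w : σ → ℕ) : MvPolynomial σ R →ₐ[R] Polynomial (MvPolynomial σ R) :=
  aeval fun i => Polynomial.C (X i) * Polynomial.X ^ w i

theorem scaleVars_monomial (w : σ → ℕ) (d : σ →₀ ℕ) (c : R) :
    scaleVars w (monomial d c) = Polynomial.C (monomial d c) * Polynomial.X ^ weight w d := by
  simp only [scaleVars, aeval_monomial, Finsupp.prod, mul_pow, Finset.prod_mul_distrib,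
    ← pow_mul, Finset.prod_pow_eq_pow_sum, weight_apply, Finsupp.sum, smul_eq_mul]
  rw [monomial_eq, Finsupp.prod, map_mul, map_prod, Polynomial.algebraMap_apply, algebraMap_eq]
  simp only [map_pow, mul_comm (w _)]
  ring

theorem coeff_scaleVars (w : σ → ℕ) (f : MvPolynomial σ R) (n : ℕ) :
    (scaleVars w f).coeff n = weightedHomogeneousComponent w n f := by
  classical
  induction f using MvPolynomial.induction_on' with
  | monomial d c =>
    ext e
    rw [scaleVars_monomial, Polynomial.coeff_C_mul_X_pow, coeff_weightedHomogeneousComponent]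
    by_cases hde : d = e
    · subst hde; by_cases h : weight w d = n <;> simp_all [eq_comm]
    · split_ifs <;> simp [coeff_monomial, hde]
  | add p q hp hq => rw [map_add, Polynomial.coeff_add, hp, hq, map_add]

theorem X_pow_dvd_scaleVars_iff (w : σ → ℕ) (f : MvPolynomial σ R) (m : ℕ) :
    Polynomial.X ^ m ∣ scaleVars w f ↔ ∀ d ∈ f.support, m ≤ weight w d := by
  classical
  simp only [Polynomial.X_pow_dvd_iff, coeff_scaleVars, MvPolynomial.ext_iff,
    coeff_weightedHomogeneousComponent, coeff_zero, mem_support_iff]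
  constructor
  · intro h d hd
    by_contra! hlt
    simpa [hd] using h _ hlt d
  · intro h n hn d
    split_ifs with hw
    · by_contra hd
      exact absurd (h d hd) (by omega)
    · rfl

variable (S : Set σ)

theorem monomial_mem_span_X_image_pow {m : ℕ} {d : σ →₀ ℕ} (c : R)
    (hd : m ≤ weight (S.indicator 1) d) : monomial d c ∈ Ideal.span (X '' S) ^ m := by
  refine Ideal.pow_le_pow_right hd ?_
  rw [monomial_eq, weight_apply, Finsupp.prod, Finsupp.sum, ← Finset.prod_pow_eq_pow_sum]
  refine Ideal.mul_mem_left _ _ (Ideal.prod_mem_prod fun i _ => ?_)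
  by_cases hi : i ∈ S
  · simpa [hi] using Ideal.pow_mem_pow (Ideal.subset_span (Set.mem_image_of_mem X hi)) (d i)
  · simp [hi]

theorem mem_span_X_image_pow_iff {m : ℕ} {f : MvPolynomial σ R} :
    f ∈ Ideal.span (X '' S) ^ m ↔ Polynomial.X ^ m ∣ scaleVars (S.indicator 1) f := by
  constructor
  · intro hf
    have hspan : (Ideal.span (X '' S)).map (scaleVars (R := R) (S.indicator 1)) ≤
        Ideal.span {Polynomial.X} := by
      rw [Ideal.map_span, Ideal.span_le]
      rintro _ ⟨_, ⟨i, hi, rfl⟩, rfl⟩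
      simp [scaleVars, hi, Ideal.mem_span_singleton]
    rw [← Ideal.mem_span_singleton, ← Ideal.span_singleton_pow]
    have := Ideal.mem_map_of_mem (scaleVars (R := R) (S.indicator 1)) hf
    rw [Ideal.map_pow] at this
    exact Ideal.pow_right_mono hspan m this
  · intro h
    rw [X_pow_dvd_scaleVars_iff] at h
    rw [f.as_sum]
    exact Ideal.sum_mem _ fun d hd => monomial_mem_span_X_image_pow S _ (h d hd)

theorem isPrimary_span_X_image_pow [IsDomain R] {m : ℕ} (hm : m ≠ 0) :
    (Ideal.span (X '' S) ^ m : Ideal (MvPolynomial σ R)).IsPrimary := by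
  have hX : Prime (Polynomial.X : Polynomial (MvPolynomial σ R)) := Polynomial.prime_X
  refine Ideal.isPrimary_iff.mpr ⟨fun htop => ?_, fun {f u} hfu => ?_⟩
  · have h1 := (mem_span_X_image_pow_iff S (m := m) (f := 1)).mp (htop ▸ Submodule.mem_top)
    rw [map_one] at h1
    exact hX.not_isUnit (isUnit_of_dvd_one ((dvd_pow_self _ hm).trans h1))
  · refine or_iff_not_imp_right.mpr fun hu => ?_
    have hu' : ¬ Polynomial.X ∣ scaleVars (S.indicator 1) u := by
      rw [← pow_one Polynomial.X, ← mem_span_X_image_pow_iff, pow_one]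
      rw [Ideal.radical_pow _ hm] at hu
      exact fun h => hu (Ideal.le_radical h)
    rw [mem_span_X_image_pow_iff, map_mul] at hfu
    rw [mem_span_X_image_pow_iff]
    exact hX.pow_dvd_of_dvd_mul_right m hu' hfu

theorem map_le_pow_map_span_X_image_iff [IsDomain R] (P : Ideal (MvPolynomial σ R)) [P.IsPrime]
    (hP : Ideal.span (X '' S) ≤ P) (J : Ideal (MvPolynomial σ R)) (m : ℕ) :
    J.map (algebraMap (MvPolynomial σ R) (Localization.AtPrime P)) ≤
        (Ideal.span (X '' S)).map (algebraMap (MvPolynomial σ R) (Localization.AtPrime P)) ^ m ↔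
      J ≤ Ideal.span (X '' S) ^ m := by
  rw [← Ideal.map_pow, Ideal.map_le_iff_le_comap]
  rcases eq_or_ne m 0 with rfl | hm
  · simp [Ideal.map_top]
  rw [← Ideal.under_def, IsLocalization.under_map_of_isPrimary_disjoint P.primeCompl _
    (isPrimary_span_X_image_pow S hm)]
  refine Set.disjoint_left.mpr fun u hu hu' => hu (hP ?_)
  exact Ideal.pow_le_self hm hu'

end MvPolynomial

theorem Ivan_eq_span_X_image (K : Type) [Field K] (s r : ℕ) (ξ : BV s r → K) :
    Ivan K s r ξ = Ideal.span (X '' {i | ξ i = 0}) := by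
  simp only [Ivan, Set.image, Set.mem_ofPred_eq, eq_comm]

theorem Eord_eq_sSup (K : Type) [Field K] (s r : ℕ) (ξ : BV s r → K) (J : Ideal (BR K s r)) :
    Eord K s r ξ J =
      sSup ((fun m : ℕ => (m : ℕ∞)) '' {m | J ≤ Ideal.span (X '' {i | ξ i = 0}) ^ m}) := by
  have hle : Ideal.span (X '' {i | ξ i = 0}) ≤ mAt K s r ξ := by
    rw [Ideal.span_le]
    rintro _ ⟨i, hi, rfl⟩
    simpa [mAt] using hi
  simp only [Eord, Ivan_eq_span_X_image, map_le_pow_map_span_X_image_iff _ _ hle]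

theorem Eord_constant_on_strata_general
    (K : Type) [Field K] (s r : ℕ)
    (J : Ideal (BR K s r))
    (ξ η : BV s r → K)
    (hsame : ∀ i : BV s r, ξ i = 0 ↔ η i = 0) :
    Eord K s r ξ J = Eord K s r η J := by
  rw [Eord_eq_sSup, Eord_eq_sSup, Set.ext hsame]

/-- the `E`-order of a binomial ideal is constant along the points of each
stratum of the stratification defined by the coordinate hyperplanes: if `ξ, η ∈ W` have
the same vanishing coordinates, then `Eord_ξ(J) = Eord_η(J)`. -/
theorem Eord_constant_on_strata
    (K : Type) [Field K] [IsAlgClosed K] (s r : ℕ)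
    (J : Ideal (BR K s r)) (hJ : IsBinomialIdeal K s r J)
    (ξ η : BV s r → K) (hξ : ξ ∈ Wset K s r) (hη : η ∈ Wset K s r)
    (hsame : ∀ i : BV s r, ξ i = 0 ↔ η i = 0) :
    Eord K s r ξ J = Eord K s r η J :=
  Eord_constant_on_strata_general K s r J ξ η hsame
end

section
/- Let J ⊆ R be a binomial ideal, let θ > 0 and suppose θ = max{Eord_η(J) : η ∈ W} is attained at a point ξ ∈ W. Suppose f ∈ J is a non-hyperbolic binomial f = y^{γ₊}x^α − b·y^{γ₋}x^β with b ≠ 0, α, β of disjoint supports, 0 < |α| ≤ |β|, |α| = θ, Eord_ξ(f) = θ, and ξ_i = 0 for every i with α_i > 0. Then the E-singular locus ESing(J,θ) ∩ W = {η ∈ W : Eord_η(J) ≥ θ} is contained in the hyperplane {η : η_i = 0} for every index i with α_i > 0. -/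
open MvPolynomial

noncomputable section AuxProof

variable {K : Type} [Field K] {s r : ℕ}

open Classical in
private def sig (χ : BV s r → K) : BV s r → Polynomial (BR K s r) :=
  fun v => if χ v = 0 then Polynomial.X * Polynomial.C (X v) else Polynomial.C (X v)

private lemma aeval_sig_xPow (χ : BV s r → K) (α : Fin s → ℕ) :
    aeval (sig χ) (xPow K s r α)
      = Polynomial.X ^ (nsumAt K s r χ α) * Polynomial.C (xPow K s r α) := by
  classical
  unfold xPow nsumAt
  rw [map_prod]
  have h : ∀ k : Fin s, aeval (sig χ) (X (Sum.inl k) ^ α k : BR K s r)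
      = Polynomial.X ^ (if χ (Sum.inl k) = 0 then α k else 0)
        * Polynomial.C (X (Sum.inl k) ^ α k : BR K s r) := by
    intro k
    rw [map_pow, aeval_X]
    unfold sig
    split_ifs
    · rw [mul_pow, map_pow]
    · rw [map_pow, pow_zero, one_mul]
  rw [Finset.prod_congr rfl (fun k _ => h k), Finset.prod_mul_distrib,
    Finset.prod_pow_eq_pow_sum, ← map_prod]

private lemma aeval_sig_yPow (χ : BV s r → K) (hχ : ∀ j, χ (Sum.inr j) ≠ 0)
    (δ : Fin r → ℕ) :
    aeval (sig χ) (yPow K s r δ) = Polynomial.C (yPow K s r δ) := by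
  unfold yPow
  rw [map_prod]
  have h : ∀ j : Fin r, aeval (sig χ) (X (Sum.inr j) ^ δ j : BR K s r)
      = Polynomial.C (X (Sum.inr j) ^ δ j : BR K s r) := by
    intro j
    rw [map_pow, aeval_X]
    unfold sig
    rw [if_neg (hχ j), map_pow]
  rw [Finset.prod_congr rfl (fun j _ => h j), ← map_prod]

private lemma aeval_sig_nhb (χ : BV s r → K) (hχ : ∀ j, χ (Sum.inr j) ≠ 0)
    (γ : Fin r → ℤ) (α β : Fin s → ℕ) (b : K) :
    aeval (sig χ) (nhb K s r γ α β b)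
      = Polynomial.X ^ (nsumAt K s r χ α)
          * Polynomial.C (yPow K s r (ipos r γ) * xPow K s r α)
        - Polynomial.X ^ (nsumAt K s r χ β)
          * Polynomial.C (C b * yPow K s r (ineg r γ) * xPow K s r β) := by
  unfold nhb
  rw [map_sub, map_mul, map_mul, map_mul, aeval_sig_xPow, aeval_sig_xPow,
    aeval_sig_yPow χ hχ, aeval_sig_yPow χ hχ, aeval_C]
  have : algebraMap K (Polynomial (BR K s r)) b = Polynomial.C (C b) := rfl
  rw [this]
  simp only [map_mul]
  ring

private lemma xPow_ne_zero (α : Fin s → ℕ) : xPow K s r α ≠ 0 := by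
  unfold xPow
  exact Finset.prod_ne_zero_iff.2 fun k _ => pow_ne_zero _ (X_ne_zero _)

private lemma yPow_ne_zero (δ : Fin r → ℕ) : yPow K s r δ ≠ 0 := by
  unfold yPow
  exact Finset.prod_ne_zero_iff.2 fun j _ => pow_ne_zero _ (X_ne_zero _)

private lemma eval_evalZero_sig (χ : BV s r → K) (p : BR K s r) :
    eval χ (Polynomial.eval 0 (aeval (sig χ) p)) = eval χ p := by
  induction p using MvPolynomial.induction_on with
  | C a =>
    have : aeval (sig χ) (C a : BR K s r) = Polynomial.C (C a) := by
      rw [aeval_C]; rfl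
    rw [this]; simp
  | add p q hp hq => simp [map_add, hp, hq]
  | mul_X p v hp =>
    rw [map_mul, aeval_X]
    by_cases h : χ v = 0 <;> simp [sig, h, hp]

end AuxProof

/-- let `J` be a binomial ideal whose maximal `E`-order on `W` is `θ > 0`,
attained at `ξ ∈ W`.  If `f = y^{γ₊}x^α − b·y^{γ₋}x^β ∈ J` is a non-hyperbolic binomial with
`b ≠ 0`, disjoint supports, `0 < |α| ≤ |β|`, `|α| = θ`, `Eord_ξ(f) = θ` and `ξ_i = 0` for all
`i` with `α_i > 0`, then `ESing(J,θ) ∩ W ⊆ {η : η_i = 0}` for every `i` with `α_i > 0`. -/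
theorem ESing_subset_hyperplane
    (K : Type) [Field K] [IsAlgClosed K] (s r : ℕ)
    (J : Ideal (BR K s r)) (hJbin : IsBinomialIdeal K s r J)
    (θ : ℕ) (hθ : 0 < θ)
    (ξ : BV s r → K) (hξ : ξ ∈ Wset K s r)
    (hmax : ∀ η ∈ Wset K s r, Eord K s r η J ≤ (θ : ℕ∞))
    (hξθ : Eord K s r ξ J = (θ : ℕ∞))
    (γ : Fin r → ℤ) (α β : Fin s → ℕ) (b : K) (hb : b ≠ 0)
    (hdisj : ∀ i, α i = 0 ∨ β i = 0)
    (hα : 0 < ∑ i, α i) (hαβ : ∑ i, α i ≤ ∑ i, β i) (hαθ : ∑ i, α i = θ)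
    (hfJ : nhb K s r γ α β b ∈ J)
    (hford : Eord K s r ξ (Ideal.span {nhb K s r γ α β b}) = (θ : ℕ∞))
    (hξ0 : ∀ i, 0 < α i → ξ (Sum.inl i) = 0)
    (i : Fin s) (hi : 0 < α i)
    (η : BV s r → K) (hη : η ∈ Wset K s r) (hηθ : (θ : ℕ∞) ≤ Eord K s r η J) :
    η (Sum.inl i) = 0 := by
  classical
  by_contra hne
  set f : BR K s r := nhb K s r γ α β b with hf
  set φ : BR K s r →+* Oloc K s r η := algebraMap (BR K s r) (Oloc K s r η) with hφ
  -- Step 1: from `hηθ`, find `m ≥ θ` with `J·O ≤ (I·O)^m`, hence `J·O ≤ (I·O)^θ`.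
  obtain ⟨m, hmem, hθm⟩ :
      ∃ m : ℕ, (J.map φ ≤ ((Ivan K s r η).map φ) ^ m) ∧ θ ≤ m := by
    by_contra h
    push_neg at h
    have hb' : Eord K s r η J ≤ ((θ - 1 : ℕ) : ℕ∞) := by
      apply sSup_le
      rintro x ⟨m, hm, rfl⟩
      have hmθ : m < θ := by
        by_contra h'
        exact absurd (le_of_not_gt h') (not_le_of_gt (h m hm))
      show (m : ℕ∞) ≤ ((θ - 1 : ℕ) : ℕ∞)
      exact Nat.cast_le.2 (Nat.le_sub_one_of_lt hmθ)
    have := le_trans hηθ hb'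
    rw [Nat.cast_le] at this
    omega
  have hJθ : J.map φ ≤ ((Ivan K s r η).map φ) ^ θ :=
    hmem.trans (Ideal.pow_le_pow_right hθm)
  -- Step 2: extract `g` with `eval η g ≠ 0` and `g * f ∈ (Ivan η)^θ`.
  have hfmem : φ f ∈ ((Ivan K s r η) ^ θ).map φ := by
    rw [Ideal.map_pow]
    exact hJθ (Ideal.mem_map_of_mem _ hfJ)
  rw [IsLocalization.mem_map_algebraMap_iff (mAt K s r η).primeCompl] at hfmem
  obtain ⟨⟨⟨p, hpI⟩, ⟨g, hg⟩⟩, heq⟩ := hfmem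
  have hMnzd : (mAt K s r η).primeCompl ≤ nonZeroDivisors (BR K s r) :=
    le_nonZeroDivisors_of_noZeroDivisors fun h0 =>
      h0 ((mAt K s r η).zero_mem : (0 : BR K s r) ∈ mAt K s r η)
  have hinj : Function.Injective φ := IsLocalization.injective _ hMnzd
  have hgf : f * g ∈ (Ivan K s r η) ^ θ := by
    have : φ (f * g) = φ p := by
      rw [map_mul]; exact heq
    rwa [hinj this]
  have hgη : eval η g ≠ 0 := by
    intro h0
    exact hg (by simpa [mAt, RingHom.mem_ker] using h0)
  -- Step 3: push into `R[t]` via `Φ = aeval (sig η)`.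
  set Φ : BR K s r →ₐ[K] Polynomial (BR K s r) := aeval (sig η) with hΦ
  have hIX : (Ivan K s r η).map Φ ≤ Ideal.span {(Polynomial.X : Polynomial (BR K s r))} := by
    rw [Ivan, Ideal.map_span, Ideal.span_le]
    rintro q ⟨p', ⟨v, hv0, rfl⟩, rfl⟩
    have : Φ (X v) = Polynomial.X * Polynomial.C (X v) := by
      rw [hΦ, aeval_X]; unfold sig; rw [if_pos hv0]
    rw [this]
    exact Ideal.mem_span_singleton.2 (dvd_mul_right _ _)
  have hdvd : (Polynomial.X : Polynomial (BR K s r)) ^ θ ∣ Φ f * Φ g := by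
    have h1 : Φ (f * g) ∈ ((Ivan K s r η).map Φ) ^ θ := by
      have := Ideal.mem_map_of_mem Φ hgf
      rwa [Ideal.map_pow] at this
    have h2 : Φ (f * g) ∈ Ideal.span {(Polynomial.X : Polynomial (BR K s r)) ^ θ} := by
      rw [← Ideal.span_singleton_pow]
      exact Ideal.pow_right_mono hIX θ h1
    rw [map_mul] at h2
    exact Ideal.mem_span_singleton.1 h2
  -- Step 4: `Φ g` has nonzero constant coefficient.
  have hg0 : (Φ g).coeff 0 ≠ 0 := by
    rw [Polynomial.coeff_zero_eq_eval_zero]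
    intro h0
    apply hgη
    rw [← eval_evalZero_sig η g, h0, map_zero]
  have hgne : Φ g ≠ 0 := fun h => hg0 (by rw [h, Polynomial.coeff_zero])
  have hgtd : (Φ g).natTrailingDegree = 0 :=
    Nat.le_zero.1 (Polynomial.natTrailingDegree_le_of_ne_zero hg0)
  -- Step 5: compute `Φ f` and bound its trailing degree by `a := nsumAt η α < θ`.
  set u : BR K s r := yPow K s r (ipos r γ) * xPow K s r α with hu
  set w : BR K s r := C b * yPow K s r (ineg r γ) * xPow K s r β with hw
  have hη' : ∀ j : Fin r, η (Sum.inr j) ≠ 0 := hη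
  have hΦf : Φ f = Polynomial.X ^ (nsumAt K s r η α) * Polynomial.C u
      - Polynomial.X ^ (nsumAt K s r η β) * Polynomial.C w :=
    aeval_sig_nhb η hη' γ α β b
  have hune : u ≠ 0 := mul_ne_zero (yPow_ne_zero _) (xPow_ne_zero _)
  -- `u ≠ w`, via the substitution at the auxiliary point `ζ`.
  have huw : u ≠ w := by
    intro huw
    set ζ : BV s r → K := fun v => if v = Sum.inl i then 0 else 1 with hζ
    have hζ' : ∀ j : Fin r, ζ (Sum.inr j) ≠ 0 := by
      intro j
      simp [hζ]
    have hζα : nsumAt K s r ζ α = α i := by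
      unfold nsumAt
      rw [show (∑ k, if ζ (Sum.inl k) = 0 then α k else 0)
          = ∑ k, if k = i then α k else 0 from
        Finset.sum_congr rfl fun k _ => by
          by_cases h : k = i <;> simp [hζ, h]]
      simp
    have hζβ : nsumAt K s r ζ β = 0 := by
      unfold nsumAt
      rw [show (∑ k, if ζ (Sum.inl k) = 0 then β k else 0)
          = ∑ k, if k = i then β k else 0 from
        Finset.sum_congr rfl fun k _ => by
          by_cases h : k = i <;> simp [hζ, h]]
      have hβi : β i = 0 := by
        rcases hdisj i with h | h
        · omega
        · exact h
      simp [hβi]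
    have h1 : aeval (sig ζ) u = Polynomial.X ^ (α i) * Polynomial.C u := by
      rw [hu, map_mul, aeval_sig_yPow ζ hζ', aeval_sig_xPow ζ, hζα, map_mul]
      ring
    have h2 : aeval (sig ζ) w = Polynomial.C w := by
      rw [hw, map_mul, map_mul, aeval_sig_yPow ζ hζ', aeval_sig_xPow ζ, hζβ, aeval_C]
      have : algebraMap K (Polynomial (BR K s r)) b = Polynomial.C (C b) := rfl
      rw [this, pow_zero, one_mul, map_mul, map_mul]
    have h3 : Polynomial.X ^ (α i) * Polynomial.C u = Polynomial.C w := by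
      rw [← h1, ← h2, huw]
    have hcz : (Polynomial.X ^ (α i) * Polynomial.C u : Polynomial (BR K s r)).coeff 0 = 0 := by
      rw [Polynomial.mul_coeff_zero, Polynomial.coeff_X_pow, if_neg (by omega), zero_mul]
    rw [h3, Polynomial.coeff_C_zero] at hcz
    rw [huw, hcz] at hune
    exact hune rfl
  have hcoeff : (Φ f).coeff (nsumAt K s r η α) ≠ 0 := by
    rw [hΦf, Polynomial.coeff_sub,
      mul_comm (Polynomial.X ^ (nsumAt K s r η α) : Polynomial (BR K s r)) _,
      mul_comm (Polynomial.X ^ (nsumAt K s r η β) : Polynomial (BR K s r)) _,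
      Polynomial.coeff_C_mul_X_pow, Polynomial.coeff_C_mul_X_pow, if_pos rfl]
    by_cases h : nsumAt K s r η α = nsumAt K s r η β
    · rw [if_pos h]
      exact sub_ne_zero.2 huw
    · rw [if_neg h, sub_zero]
      exact hune
  have hfne : Φ f ≠ 0 := fun h => hcoeff (by rw [h, Polynomial.coeff_zero])
  have hftd : (Φ f).natTrailingDegree ≤ nsumAt K s r η α :=
    Polynomial.natTrailingDegree_le_of_ne_zero hcoeff
  have haθ : nsumAt K s r η α < θ := by
    rw [← hαθ]
    unfold nsumAt
    apply Finset.sum_lt_sum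
    · intro k _
      split_ifs <;> omega
    · exact ⟨i, Finset.mem_univ i, by rw [if_neg hne]; omega⟩
  -- Step 6: contradiction on trailing degrees.
  have hθle : θ ≤ (Φ f * Φ g).natTrailingDegree := by
    apply Polynomial.le_natTrailingDegree (mul_ne_zero hfne hgne)
    intro n hn
    exact Polynomial.X_pow_dvd_iff.1 hdvd n hn
  rw [Polynomial.natTrailingDegree_mul hfne hgne, hgtd, add_zero] at hθle
  omega
end

section
/- Let P ⊆ R be an ideal and let c ≥ 1 be an integer. Then for every point ξ ∈ W with ξ_1 = 0 and Eord_ξ(P) ≥ c, the coefficient ideal of P along E with respect to the hypersurface V = {x_1 = 0} satisfies Eord_{ξ'}(C(P,c)) ≥ c!. -/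
open MvPolynomial

/-!
If `Eord_ξ(P) ≥ c`, each `f ∈ P` satisfies `u f ∈ I_ξ^c` for some `u` with `u(ξ) ≠ 0`.
Viewed in `R'[x_1]`, the generators of `I_ξ` are `x_1` and constants lying in `I_{ξ'}`, so the
coefficient of `x_1^k` of an element of `I_ξ^c` lies in `I_{ξ'}^{c-k}`. Comparing coefficients
of `u f` by induction on `k` gives `u_0^{k+1} a_{f,k} ∈ I_{ξ'}^{c-k}` with `u_0 = a_{u,0}`, and
`u_0(ξ') = u(ξ) ≠ 0` because `ξ_1 = 0`. Raising to the power `c!/(c-k)` puts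
`a_{f,k}^{c!/(c-k)}` into `I_{ξ'}^{c!}` up to the factor `u_0^{(k+1)c!/(c-k)}`, a unit of
`O_{ξ'}`.
-/

namespace Polynomial

variable {A : Type*} [CommRing A]

def coeffFiltration (J : Ideal A) (m : ℕ) : Ideal A[X] where
  carrier := {p | ∀ k, p.coeff k ∈ J ^ (m - k)}
  add_mem' ha hb k := by
    rw [coeff_add]
    exact add_mem (ha k) (hb k)
  zero_mem' k := by simp
  smul_mem' q p hp k := by
    rw [smul_eq_mul, coeff_mul]
    refine sum_mem fun ij hij => ?_
    have hk := Finset.HasAntidiagonal.mem_antidiagonal.mp hij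
    exact Ideal.mul_mem_left _ _ (Ideal.pow_le_pow_right (by omega) (hp ij.2))

variable {J : Ideal A} {m : ℕ} {p q : A[X]}

theorem mem_coeffFiltration_one_of_coeff_zero_mem (h : p.coeff 0 ∈ J) :
    p ∈ coeffFiltration J 1 := by
  rintro (_ | k)
  · simpa using h
  · simp

theorem coeffFiltration_mul_le (a b : ℕ) :
    coeffFiltration J a * coeffFiltration J b ≤ coeffFiltration J (a + b) := by
  refine Ideal.mul_le.mpr fun p hp q hq k => ?_
  rw [coeff_mul]
  refine sum_mem fun ij hij => ?_
  have hk := Finset.HasAntidiagonal.mem_antidiagonal.mp hij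
  have hmem : p.coeff ij.1 * q.coeff ij.2 ∈ J ^ ((a - ij.1) + (b - ij.2)) := by
    rw [pow_add]
    exact Ideal.mul_mem_mul (hp ij.1) (hq ij.2)
  exact Ideal.pow_le_pow_right (by omega) hmem

theorem coeffFiltration_one_pow_le (c : ℕ) : coeffFiltration J 1 ^ c ≤ coeffFiltration J c := by
  induction c with
  | zero => exact fun p _ k => by simp
  | succ n ih =>
    calc coeffFiltration J 1 ^ (n + 1) = coeffFiltration J 1 ^ n * coeffFiltration J 1 :=
          pow_succ _ _
      _ ≤ coeffFiltration J n * coeffFiltration J 1 := Ideal.mul_mono_left ih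
      _ ≤ coeffFiltration J (n + 1) := coeffFiltration_mul_le n 1

theorem coeff_zero_pow_mul_coeff_mem (h : p * q ∈ coeffFiltration J m) (k : ℕ) :
    p.coeff 0 ^ (k + 1) * q.coeff k ∈ J ^ (m - k) := by
  induction k using Nat.strong_induction_on with
  | _ k ih =>
  have hcoeff : (p * q).coeff k =
      ∑ i ∈ Finset.range k, p.coeff (i + 1) * q.coeff (k - (i + 1)) +
        p.coeff 0 * q.coeff k := by
    rw [coeff_mul, Finset.Nat.sum_antidiagonal_eq_sum_range_succ (fun i j => p.coeff i * q.coeff j),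
      Finset.sum_range_succ', Nat.sub_zero]
  have hlower : ∀ i < k,
      p.coeff 0 ^ k * (p.coeff (i + 1) * q.coeff (k - (i + 1))) ∈ J ^ (m - k) := by
    intro i hi
    obtain ⟨j, rfl⟩ := Nat.exists_eq_add_of_lt hi
    rw [show i + j + 1 - (i + 1) = j by omega, show p.coeff 0 ^ (i + j + 1) * (p.coeff (i + 1) *
      q.coeff j) = p.coeff 0 ^ i * p.coeff (i + 1) * (p.coeff 0 ^ (j + 1) * q.coeff j) by ring]
    exact Ideal.mul_mem_left _ _ (Ideal.pow_le_pow_right (by omega) (ih j (by omega)))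
  have hsolve : p.coeff 0 ^ (k + 1) * q.coeff k = p.coeff 0 ^ k * (p * q).coeff k -
      ∑ i ∈ Finset.range k, p.coeff 0 ^ k * (p.coeff (i + 1) * q.coeff (k - (i + 1))) := by
    rw [hcoeff, ← Finset.mul_sum]
    ring
  rw [hsolve]
  exact sub_mem (Ideal.mul_mem_left _ _ (h k))
    (sum_mem fun i hi => hlower i (Finset.mem_range.mp hi))

end Polynomial

theorem Ideal.pow_div_mem_pow_of_dvd {R : Type*} [CommSemiring R] {I : Ideal R} {a : R} {n m : ℕ}
    (ha : a ∈ I ^ n) (hnm : n ∣ m) : a ^ (m / n) ∈ I ^ m := by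
  obtain ⟨N, rfl⟩ := hnm
  rcases n.eq_zero_or_pos with rfl | hn
  · simp
  · rw [Nat.mul_div_cancel_left N hn, pow_mul]
    exact Ideal.pow_mem_pow ha N

section Eord

variable {K : Type} [Field K] {s r : ℕ}

theorem le_Eord_iff {ξ : BV s r → K} {J : Ideal (BR K s r)} {c : ℕ} :
    (c : ℕ∞) ≤ Eord K s r ξ J ↔ J.map (algebraMap (BR K s r) (Oloc K s r ξ)) ≤
      (Ivan K s r ξ).map (algebraMap (BR K s r) (Oloc K s r ξ)) ^ c := by
  refine ⟨fun h => ?_, fun h => le_sSup ⟨c, h, rfl⟩⟩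
  rcases c.eq_zero_or_pos with rfl | hc
  · simp
  obtain ⟨_, ⟨m, hm, rfl⟩, hlt⟩ := lt_sSup_iff.mp
    (lt_of_lt_of_le (by exact_mod_cast Nat.sub_lt hc one_pos : ((c - 1 : ℕ) : ℕ∞) < c) h)
  have hcm : c - 1 < m := Nat.cast_lt.mp hlt
  exact hm.trans (Ideal.pow_le_pow_right (by omega))

theorem algebraMap_mem_map_Oloc_iff {ξ : BV s r → K} (I : Ideal (BR K s r)) (g : BR K s r) :
    algebraMap _ (Oloc K s r ξ) g ∈ I.map (algebraMap _ (Oloc K s r ξ)) ↔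
      ∃ w, eval ξ w ≠ 0 ∧ w * g ∈ I :=
  IsLocalization.algebraMap_mem_map_algebraMap_iff (mAt K s r ξ).primeCompl _ I g

end Eord

section ToPoly

variable {K : Type} [Field K] {s r : ℕ}

theorem toPoly_X_zero : toPoly K s r (X (Sum.inl 0)) = Polynomial.X := by
  simp [toPoly, varEquiv, optSum, optionEquivLeft_X_none]

theorem toPoly_X_succ (i : Fin s) :
    toPoly K s r (X (Sum.inl i.succ)) = Polynomial.C (X (Sum.inl i)) := by
  simp [toPoly, varEquiv, optSum, optionEquivLeft_X_some]

theorem toPoly_X_inr (j : Fin r) :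
    toPoly K s r (X (Sum.inr j)) = Polynomial.C (X (Sum.inr j)) := by
  simp [toPoly, varEquiv, optSum, optionEquivLeft_X_some]

theorem toPoly_C (a : K) : toPoly K s r (C a) = Polynomial.C (C a) := by
  simp [toPoly, optionEquivLeft_C]

theorem map_Ivan_le_coeffFiltration (ξ : BV (s + 1) r → K) :
    (Ivan K (s + 1) r ξ).map (toPoly K s r) ≤
      Polynomial.coeffFiltration (Ivan K s r (resPt K s r ξ)) 1 := by
  rw [Ivan, Ideal.map_span, Ideal.span_le]
  rintro _ ⟨_, ⟨v, hv, rfl⟩, rfl⟩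
  refine Polynomial.mem_coeffFiltration_one_of_coeff_zero_mem ?_
  rcases v with i | j
  · rcases Fin.eq_zero_or_eq_succ i with rfl | ⟨i, rfl⟩
    · simp [toPoly_X_zero]
    · rw [toPoly_X_succ, Polynomial.coeff_C_zero]
      exact Ideal.subset_span ⟨Sum.inl i, hv, rfl⟩
  · rw [toPoly_X_inr, Polynomial.coeff_C_zero]
    exact Ideal.subset_span ⟨Sum.inr j, hv, rfl⟩

theorem toPoly_mem_coeffFiltration {ξ : BV (s + 1) r → K} {c : ℕ} {g : BR K (s + 1) r}
    (hg : g ∈ Ivan K (s + 1) r ξ ^ c) :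
    toPoly K s r g ∈ Polynomial.coeffFiltration (Ivan K s r (resPt K s r ξ)) c := by
  have hmap : toPoly K s r g ∈ (Ivan K (s + 1) r ξ).map (toPoly K s r) ^ c := by
    rw [← Ideal.map_pow]
    exact Ideal.mem_map_of_mem _ hg
  exact Polynomial.coeffFiltration_one_pow_le c
    (Ideal.pow_right_mono (map_Ivan_le_coeffFiltration ξ) c hmap)

theorem eval_eq_eval₂_toPoly (ξ : BV (s + 1) r → K) (w : BR K (s + 1) r) :
    eval ξ w = (toPoly K s r w).eval₂ (eval (resPt K s r ξ)) (ξ (Sum.inl 0)) := by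
  induction w using MvPolynomial.induction_on with
  | C a => simp [toPoly_C]
  | add p q hp hq => simp only [map_add, Polynomial.eval₂_add, hp, hq]
  | mul_X p v hp =>
    simp only [map_mul, Polynomial.eval₂_mul, hp, eval_X]
    rcases v with i | j
    · rcases Fin.eq_zero_or_eq_succ i with rfl | ⟨i, rfl⟩
      · simp [toPoly_X_zero]
      · simp [toPoly_X_succ, resPt]
    · simp [toPoly_X_inr, resPt]

theorem eval_resPt_coeffAt_zero {ξ : BV (s + 1) r → K} (hξ1 : ξ (Sum.inl 0) = 0)
    (w : BR K (s + 1) r) : eval (resPt K s r ξ) (coeffAt K s r w 0) = eval ξ w := by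
  rw [eval_eq_eval₂_toPoly, hξ1, Polynomial.eval₂_at_zero, coeffAt]

end ToPoly

theorem Eord_coeffIdeal_ge_general
    (K : Type) [Field K] (s r : ℕ)
    (P : Ideal (BR K (s + 1) r)) (c : ℕ)
    (ξ : BV (s + 1) r → K)
    (hξ1 : ξ (Sum.inl 0) = 0)
    (hP : (c : ℕ∞) ≤ Eord K (s + 1) r ξ P) :
    (Nat.factorial c : ℕ∞) ≤ Eord K s r (resPt K s r ξ) (coeffIdeal K s r P c) := by
  rw [le_Eord_iff] at hP ⊢
  rw [coeffIdeal, Ideal.map_span, Ideal.span_le]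
  rintro _ ⟨_, ⟨f, hf, k, hk, rfl⟩, rfl⟩
  obtain ⟨u, hu, huf⟩ := (algebraMap_mem_map_Oloc_iff (ξ := ξ) (Ivan K (s + 1) r ξ ^ c) f).mp
    (by rw [Ideal.map_pow]; exact hP (Ideal.mem_map_of_mem _ hf))
  have hcoeff_mem := Polynomial.coeff_zero_pow_mul_coeff_mem
    (map_mul (toPoly K s r) u f ▸ toPoly_mem_coeffFiltration huf) k
  rw [← Ideal.map_pow, SetLike.mem_coe, algebraMap_mem_map_Oloc_iff]
  refine ⟨(coeffAt K s r u 0 ^ (k + 1)) ^ (c.factorial / (c - k)), ?_, ?_⟩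
  · rw [map_pow, map_pow, eval_resPt_coeffAt_zero hξ1]
    exact pow_ne_zero _ (pow_ne_zero _ hu)
  · rw [← mul_pow]
    exact Ideal.pow_div_mem_pow_of_dvd hcoeff_mem (Nat.dvd_factorial (by omega) (by omega))

/-- for an ideal `P ⊆ R` and an integer `c ≥ 1`, at every `ξ ∈ W` with
`ξ_1 = 0` and `Eord_ξ(P) ≥ c`, the coefficient ideal of `P` along `E` with respect to
`V = {x_1 = 0}` satisfies `Eord_{ξ'}(C(P,c)) ≥ c!`. -/
theorem Eord_coeffIdeal_ge
    (K : Type) [Field K] [IsAlgClosed K] (s r : ℕ)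
    (P : Ideal (BR K (s + 1) r)) (c : ℕ) (hc : 1 ≤ c)
    (ξ : BV (s + 1) r → K) (hξ : ξ ∈ Wset K (s + 1) r)
    (hξ1 : ξ (Sum.inl 0) = 0)
    (hP : (c : ℕ∞) ≤ Eord K (s + 1) r ξ P) :
    (Nat.factorial c : ℕ∞) ≤ Eord K s r (resPt K s r ξ) (coeffIdeal K s r P c) :=
  Eord_coeffIdeal_ge_general K s r P c ξ hξ1 hP
end

section
/- Let f = y^{γ₊}x^α − b·y^{γ₋}x^β be a non-hyperbolic binomial with α, β of disjoint supports and 0 < |α| ≤ |β|. Let I ⊆ {1,…,s} be a set of x-indices with supp(α) ⊆ I and Σ_{i∈I} β_i ≥ |α| (so that the combinatorial center Z = ∩_{i∈I}{x_i = 0} is contained in the E-equimultiple locus of f of E-order |α|). Fix j ∈ I with α_j > 0 and let σ_j : R → R be the K-algebra homomorphism sending x_i ↦ x_i·x_j for each i ∈ I∖{j} and fixing x_j, the remaining x-variables and all y-variables (the j-th chart of the blow-up along Z). Then σ_j(f) = x_j^{|α|}·g, where the weak transform g equals y^{γ₊}x^{α − α_j e_j} − b·y^{γ₋}x^{β}·x_j^{(Σ_{i∈I}β_i)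 − |α|}, and for every point ξ ∈ W one has Eord_ξ(g) ≤ |α| − α_j < |α|; in particular, in this chart the E-order of the weak transform strictly drops below that of f. -/
open MvPolynomial

noncomputable section Aux
open Classical
variable (K : Type) [Field K] (s r : ℕ)

lemma chart_yPow (I : Finset (Fin s)) (j : Fin s) (c : Fin r → ℕ) :
    chart K s r I j (yPow K s r c) = yPow K s r c := by
  unfold chart yPow
  simp [map_prod, map_pow]

lemma chart_xPow (I : Finset (Fin s)) (j : Fin s) (a : Fin s → ℕ) :
    chart K s r I j (xPow K s r a) =
      xPow K s r a * X (Sum.inl j) ^ (∑ i, if i ∈ I ∧ i ≠ j then a i else 0) := by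
  unfold chart xPow
  rw [map_prod]
  rw [← Finset.prod_pow_eq_pow_sum, ← Finset.prod_mul_distrib]
  refine Finset.prod_congr rfl fun i _ => ?_
  rw [map_pow, aeval_X]
  show (if i ∈ I ∧ i ≠ j then X (Sum.inl i) * X (Sum.inl j) else X (Sum.inl i)) ^ a i = _
  split_ifs with h
  · rw [mul_pow]
  · rw [pow_zero, mul_one]

lemma xPow_split (a : Fin s → ℕ) (j : Fin s) :
    xPow K s r a = X (Sum.inl j) ^ a j * xPow K s r (Function.update a j 0) := by
  unfold xPow
  have h1 : ∀ i, X (σ := BV s r) (R := K) (Sum.inl i) ^ (Function.update a j 0 i)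
      = Function.update (fun i => X (σ := BV s r) (R := K) (Sum.inl i) ^ a i) j 1 i := by
    intro i
    by_cases hi : i = j
    · subst hi; simp
    · simp [Function.update_of_ne hi]
  rw [Finset.prod_congr rfl (fun i _ => h1 i), Finset.prod_update_of_mem (Finset.mem_univ j),
    one_mul, ← Finset.mul_prod_erase Finset.univ _ (Finset.mem_univ j), Finset.erase_eq]

end Aux

noncomputable section Aux2
open Classical
variable (K : Type) [Field K] (s r : ℕ)

/-- evaluation sending every x-variable to `X` and every y-variable to 1. -/
def psiX : BR K s r →ₐ[K] Polynomial K :=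
  aeval (fun v => match v with | Sum.inl _ => Polynomial.X | Sum.inr _ => (1 : Polynomial K))

lemma psiX_yPow (c : Fin r → ℕ) : psiX K s r (yPow K s r c) = 1 := by
  unfold psiX yPow; simp [map_prod, map_pow]

lemma psiX_xPow (a : Fin s → ℕ) :
    psiX K s r (xPow K s r a) = Polynomial.X ^ ∑ i, a i := by
  unfold psiX xPow
  rw [map_prod, ← Finset.prod_pow_eq_pow_sum]
  refine Finset.prod_congr rfl fun i _ => ?_
  rw [map_pow, aeval_X]

/-- the map multiplying each variable vanishing at `ξ` by a fresh variable `X`. -/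
def phiT (ξ : BV s r → K) : BR K s r →ₐ[K] Polynomial (BR K s r) :=
  aeval (fun v => if ξ v = 0 then Polynomial.C (X v) * Polynomial.X else Polynomial.C (X v))

lemma phiT_X_pow (ξ : BV s r → K) (v : BV s r) (e : ℕ) :
    phiT K s r ξ (X v) ^ e =
      Polynomial.C (X v ^ e) * Polynomial.X ^ (if ξ v = 0 then e else 0) := by
  unfold phiT
  rw [aeval_X]
  split_ifs with h
  · rw [mul_pow, map_pow]
  · rw [pow_zero, mul_one, map_pow]

lemma phiT_yPow (ξ : BV s r → K) (hW : ξ ∈ Wset K s r) (c : Fin r → ℕ) :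
    phiT K s r ξ (yPow K s r c) = Polynomial.C (yPow K s r c) := by
  unfold yPow
  rw [map_prod, map_prod]
  refine Finset.prod_congr rfl fun i _ => ?_
  rw [map_pow, phiT_X_pow, if_neg (hW i), pow_zero, mul_one]

lemma phiT_xPow (ξ : BV s r → K) (a : Fin s → ℕ) :
    phiT K s r ξ (xPow K s r a) =
      Polynomial.C (xPow K s r a) * Polynomial.X ^ nsumAt K s r ξ a := by
  unfold xPow nsumAt
  rw [map_prod, ← Finset.prod_pow_eq_pow_sum, map_prod, ← Finset.prod_mul_distrib]
  refine Finset.prod_congr rfl fun i _ => ?_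
  rw [map_pow, phiT_X_pow]

lemma phiT_C (ξ : BV s r → K) (a : K) :
    phiT K s r ξ (C a) = Polynomial.C (C a) := by
  unfold phiT; simp

lemma phiT_constantCoeff (ξ : BV s r → K) (u : BR K s r) :
    eval ξ (Polynomial.constantCoeff (phiT K s r ξ u)) = eval ξ u := by
  have : (RingHom.comp (eval ξ) (RingHom.comp Polynomial.constantCoeff
      (phiT K s r ξ).toRingHom)) = eval ξ := by
    apply MvPolynomial.ringHom_ext
    · intro a; simp [phiT_C]
    · intro v
      simp only [RingHom.comp_apply, AlgHom.toRingHom_eq_coe, RingHom.coe_coe]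
      rw [eval_X]
      show eval ξ (Polynomial.constantCoeff (phiT K s r ξ (X v))) = ξ v
      unfold phiT
      rw [aeval_X]
      split_ifs with h
      · simp [h]
      · simp
  exact RingHom.congr_fun this u

lemma phiT_mem (ξ : BV s r → K) (m : ℕ) (p : BR K s r) (hp : p ∈ Ivan K s r ξ ^ m) :
    (Polynomial.X : Polynomial (BR K s r)) ^ m ∣ phiT K s r ξ p := by
  have h1 : phiT K s r ξ p ∈ Ideal.map (phiT K s r ξ) (Ivan K s r ξ ^ m) :=
    Ideal.mem_map_of_mem _ hp
  rw [Ideal.map_pow] at h1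
  have h2 : Ideal.map (phiT K s r ξ) (Ivan K s r ξ) ≤ Ideal.span {Polynomial.X} := by
    rw [Ivan, Ideal.map_span, Ideal.span_le]
    rintro q ⟨p', ⟨v, hv, rfl⟩, rfl⟩
    show phiT K s r ξ (X v) ∈ _
    unfold phiT
    rw [aeval_X, if_pos hv]
    exact Ideal.mul_mem_left _ _ (Ideal.subset_span rfl)
  have h3 := (Ideal.pow_right_mono h2 m) h1
  rwa [Ideal.span_singleton_pow, Ideal.mem_span_singleton] at h3

/-- Key reduction: a localized membership bound forces `m ≤` trailing degree bound. -/
lemma key_bound (ξ : BV s r → K) (g : BR K s r) (m m₀ : ℕ)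
    (hg : ∃ p ≤ m₀, Polynomial.coeff (phiT K s r ξ g) p ≠ 0)
    (hm : Ideal.map (algebraMap (BR K s r) (Oloc K s r ξ)) (Ideal.span {g}) ≤
      (Ideal.map (algebraMap (BR K s r) (Oloc K s r ξ)) (Ivan K s r ξ)) ^ m) :
    m ≤ m₀ := by
  obtain ⟨p, hpm, hpc⟩ := hg
  -- extract u with eval ξ u ≠ 0 and g * u ∈ Ivan ^ m
  have h1 : algebraMap (BR K s r) (Oloc K s r ξ) g ∈
      Ideal.map (algebraMap (BR K s r) (Oloc K s r ξ)) (Ivan K s r ξ ^ m) := by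
    rw [Ideal.map_pow]
    exact hm (Ideal.mem_map_of_mem _ (Ideal.subset_span rfl))
  rw [IsLocalization.mem_map_algebraMap_iff (mAt K s r ξ).primeCompl] at h1
  obtain ⟨⟨⟨a, ha⟩, ⟨u, hu⟩⟩, heq⟩ := h1
  have hMle : (mAt K s r ξ).primeCompl ≤ nonZeroDivisors (BR K s r) := by
    intro x hx
    exact mem_nonZeroDivisors_of_ne_zero (fun h0 => hx (h0 ▸ Ideal.zero_mem _))
  have hinj := IsLocalization.injective (Oloc K s r ξ) hMle
  have hgu : g * u ∈ Ivan K s r ξ ^ m := by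
    have : algebraMap (BR K s r) (Oloc K s r ξ) (g * u) =
        algebraMap (BR K s r) (Oloc K s r ξ) a := by
      rw [map_mul]; exact heq
    exact (hinj this) ▸ ha
  have huξ : eval ξ u ≠ 0 := hu
  -- pass to phiT
  have hdvd := phiT_mem K s r ξ m _ hgu
  rw [map_mul] at hdvd
  have hu0 : Polynomial.coeff (phiT K s r ξ u) 0 ≠ 0 := by
    intro h
    apply huξ
    rw [← phiT_constantCoeff K s r ξ u]
    simp [Polynomial.constantCoeff_apply, h]
  have hgne : phiT K s r ξ g ≠ 0 := fun h => hpc (by rw [h, Polynomial.coeff_zero])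
  have hune : phiT K s r ξ u ≠ 0 := fun h => hu0 (by rw [h, Polynomial.coeff_zero])
  have hprod_ne : phiT K s r ξ g * phiT K s r ξ u ≠ 0 := mul_ne_zero hgne hune
  have hntd : m ≤ (phiT K s r ξ g * phiT K s r ξ u).natTrailingDegree := by
    by_contra hlt
    push_neg at hlt
    have := Polynomial.X_pow_dvd_iff.mp hdvd _ hlt
    exact Polynomial.coeff_natTrailingDegree_ne_zero.mpr hprod_ne this
  rw [Polynomial.natTrailingDegree_mul hgne hune] at hntd
  have h5 : (phiT K s r ξ g).natTrailingDegree ≤ p :=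
    Polynomial.natTrailingDegree_le_of_ne_zero hpc
  have h6 : (phiT K s r ξ u).natTrailingDegree = 0 :=
    Polynomial.natTrailingDegree_eq_zero_of_constantCoeff_ne_zero hu0
  omega

end Aux2

lemma chart_C (K : Type) [Field K] (s r : ℕ) (I : Finset (Fin s)) (j : Fin s) (a : K) :
    chart K s r I j (C a) = C a := by
  unfold chart; simp

lemma nsumAt_le (K : Type) [Field K] (s r : ℕ) (ξ : BV s r → K) (a : Fin s → ℕ) :
    nsumAt K s r ξ a ≤ ∑ i, a i := by
  unfold nsumAt
  refine Finset.sum_le_sum fun i _ => ?_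
  split_ifs <;> simp

lemma psiX_X (K : Type) [Field K] (s r : ℕ) (j : Fin s) :
    psiX K s r (X (Sum.inl j)) = Polynomial.X := by
  unfold psiX; rw [aeval_X]

lemma psiX_C (K : Type) [Field K] (s r : ℕ) (a : K) :
    psiX K s r (C a) = Polynomial.C a := by
  unfold psiX; simp [algebraMap_eq]

/-- in the `j`-th chart of the blow-up along the combinatorial center
`Z = ∩_{i∈I}{x_i = 0}` with `supp(α) ⊆ I`, `Σ_{i∈I}β_i ≥ |α|`, `j ∈ I` and `α_j > 0`, the
non-hyperbolic binomial `f = y^{γ₊}x^α − b·y^{γ₋}x^β` transforms as `σ_j(f) = x_j^{|α|}·g`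
with weak transform `g = y^{γ₊}x^{α−α_j e_j} − b·y^{γ₋}x^β x_j^{(Σ_{i∈I}β_i)−|α|}`, and the
`E`-order of `g` at every `ξ ∈ W` satisfies `Eord_ξ(g) ≤ |α| − α_j < |α|`. -/
theorem chart_weak_transform_Eord_drops
    (K : Type) [Field K] [IsAlgClosed K] (s r : ℕ)
    (γ : Fin r → ℤ) (α β : Fin s → ℕ) (b : K)
    (hdisj : ∀ i, α i = 0 ∨ β i = 0)
    (hα : 0 < ∑ i, α i) (hαβ : ∑ i, α i ≤ ∑ i, β i)
    (I : Finset (Fin s)) (hsupp : ∀ i, α i ≠ 0 → i ∈ I)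
    (hβI : ∑ i, α i ≤ ∑ i ∈ I, β i)
    (j : Fin s) (hj : j ∈ I) (hαj : 0 < α j) :
    chart K s r I j (nhb K s r γ α β b) =
        X (Sum.inl j) ^ (∑ i, α i) *
          (yPow K s r (ipos r γ) * xPow K s r (Function.update α j 0) -
            C b * yPow K s r (ineg r γ) * xPow K s r β *
              X (Sum.inl j) ^ ((∑ i ∈ I, β i) - ∑ i, α i)) ∧
      (∀ ξ ∈ Wset K s r,
        Eord K s r ξ (Ideal.span
          {yPow K s r (ipos r γ) * xPow K s r (Function.update α j 0) -
            C b * yPow K s r (ineg r γ) * xPow K s r β *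
              X (Sum.inl j) ^ ((∑ i ∈ I, β i) - ∑ i, α i)}) ≤
          (((∑ i, α i) - α j : ℕ) : ℕ∞)) ∧
      (∑ i, α i) - α j < ∑ i, α i := by
  classical
  have hβj : β j = 0 := by rcases hdisj j with h | h; · omega
                           · exact h
  have hαjA : α j ≤ ∑ i, α i :=
    Finset.single_le_sum (f := α) (fun i _ => Nat.zero_le _) (Finset.mem_univ j)
  have hsumup : ∑ i, Function.update α j 0 i = (∑ i, α i) - α j := by
    rw [Finset.sum_update_of_mem (Finset.mem_univ j), zero_add]
    have e2 := Finset.add_sum_erase Finset.univ α (Finset.mem_univ j)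
    rw [Finset.erase_eq] at e2
    omega
  have hsumα : (∑ i, if i ∈ I ∧ i ≠ j then α i else 0) = (∑ i, α i) - α j := by
    have h1 : ∀ i, (if i ∈ I ∧ i ≠ j then α i else 0) = Function.update α j 0 i := by
      intro i
      by_cases h : i = j
      · subst h; simp
      · rw [Function.update_of_ne h]
        by_cases hI : i ∈ I
        · rw [if_pos ⟨hI, h⟩]
        · have : α i = 0 := by by_contra hc; exact hI (hsupp i hc)
          rw [if_neg (fun hh => hI hh.1), this]
    rw [Finset.sum_congr rfl fun i _ => h1 i, hsumup]
  have hsumβ : (∑ i, if i ∈ I ∧ i ≠ j then β i else 0) = ∑ i ∈ I, β i := by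
    have h1 : ∀ i, (if i ∈ I ∧ i ≠ j then β i else 0) = (if i ∈ I then β i else 0) := by
      intro i
      by_cases h : i = j
      · subst h; simp [hj, hβj]
      · by_cases hI : i ∈ I
        · rw [if_pos ⟨hI, h⟩, if_pos hI]
        · rw [if_neg (fun hh => hI hh.1), if_neg hI]
    rw [Finset.sum_congr rfl fun i _ => h1 i, Finset.sum_ite_mem, Finset.univ_inter]
  have hpow1 : (X (Sum.inl j) : BR K s r) ^ (α j) *
      X (Sum.inl j) ^ ((∑ i, α i) - α j) = X (Sum.inl j) ^ (∑ i, α i) := by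
    rw [← pow_add]; congr 1; omega
  have hpow2 : (X (Sum.inl j) : BR K s r) ^ (∑ i, α i) *
      X (Sum.inl j) ^ ((∑ i ∈ I, β i) - ∑ i, α i) = X (Sum.inl j) ^ (∑ i ∈ I, β i) := by
    rw [← pow_add]; congr 1; omega
  refine ⟨?_, ?_, Nat.sub_lt hα hαj⟩
  · unfold nhb
    rw [map_sub, map_mul, map_mul, map_mul, chart_yPow, chart_yPow, chart_xPow, chart_xPow,
      chart_C, hsumα, hsumβ, xPow_split K s r α j]
    rw [mul_sub]
    congr 1
    · linear_combination (yPow K s r (ipos r γ) * xPow K s r (Function.update α j 0)) * hpow1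
    · linear_combination (-(C b * yPow K s r (ineg r γ) * xPow K s r β)) * hpow2
  · intro ξ hW
    set g : BR K s r := yPow K s r (ipos r γ) * xPow K s r (Function.update α j 0) -
      C b * yPow K s r (ineg r γ) * xPow K s r β *
        X (Sum.inl j) ^ ((∑ i ∈ I, β i) - ∑ i, α i) with hgdef
    apply sSup_le
    rintro x ⟨m, hm, rfl⟩
    simp only [Set.mem_setOf_eq] at hm
    rw [Nat.cast_le]
    set E := (∑ i ∈ I, β i) - ∑ i, α i with hE
    set p := nsumAt K s r ξ (Function.update α j 0) with hp
    set q := nsumAt K s r ξ β + (if ξ (Sum.inl j) = 0 then E else 0) with hq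
    refine key_bound K s r ξ g m ((∑ i, α i) - α j) ⟨p, ?_, ?_⟩ hm
    · rw [hp, ← hsumup]
      exact nsumAt_le K s r ξ _
    · have hφ : phiT K s r ξ g =
          Polynomial.C (yPow K s r (ipos r γ) * xPow K s r (Function.update α j 0)) *
              Polynomial.X ^ p -
            Polynomial.C (C b * yPow K s r (ineg r γ) * xPow K s r β *
              X (Sum.inl j) ^ E) * Polynomial.X ^ q := by
        rw [hgdef]
        simp only [map_sub, map_mul, map_pow]
        rw [phiT_yPow K s r ξ hW, phiT_yPow K s r ξ hW, phiT_xPow, phiT_xPow, phiT_C,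
          phiT_X_pow, hq]
        simp only [map_pow]
        ring
      rw [hφ]
      have hcoeff : (Polynomial.C (yPow K s r (ipos r γ) *
            xPow K s r (Function.update α j 0)) * Polynomial.X ^ p -
            Polynomial.C (C b * yPow K s r (ineg r γ) * xPow K s r β *
              X (Sum.inl j) ^ E) * Polynomial.X ^ q).coeff p =
          yPow K s r (ipos r γ) * xPow K s r (Function.update α j 0) -
            (if q = p then C b * yPow K s r (ineg r γ) * xPow K s r β *
              X (Sum.inl j) ^ E else 0) := by
        rw [Polynomial.coeff_sub, Polynomial.coeff_C_mul, Polynomial.coeff_C_mul,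
          Polynomial.coeff_X_pow, Polynomial.coeff_X_pow, if_pos rfl, mul_one]
        rcases eq_or_ne q p with h | h
        · rw [if_pos h.symm, mul_one, if_pos h]
        · rw [if_neg (Ne.symm h), mul_zero, if_neg h]
      rw [hcoeff]
      have hlt : (∑ i, Function.update α j 0 i) < (∑ i, β i) + E :=
        lt_of_lt_of_le (hsumup ▸ Nat.sub_lt hα hαj)
          (le_trans hαβ (Nat.le_add_right _ _))
      by_cases hqp : q = p
      · rw [if_pos hqp]
        intro h0
        have hψ := congrArg (psiX K s r) h0
        simp only [map_sub, map_mul, map_pow, map_zero, psiX_yPow, psiX_xPow, psiX_X,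
          psiX_C, one_mul, mul_one] at hψ
        rw [mul_assoc, ← pow_add, sub_eq_zero] at hψ
        have hb0 : b ≠ 0 := by
          rintro rfl
          rw [map_zero, zero_mul] at hψ
          exact pow_ne_zero _ Polynomial.X_ne_zero hψ
        have hdeg := congrArg Polynomial.natDegree hψ
        rw [Polynomial.natDegree_X_pow, Polynomial.natDegree_C_mul hb0,
          Polynomial.natDegree_X_pow] at hdeg
        omega
      · rw [if_neg hqp, sub_zero]
        intro h0
        have hψ := congrArg (psiX K s r) h0
        simp only [map_mul, map_zero, psiX_yPow, psiX_xPow, one_mul] at hψ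
        exact pow_ne_zero _ Polynomial.X_ne_zero hψ
end
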